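/- For all odd integers j ≥ 1 and b ≥ 1 such that j = 1 or b = 1, the rooted tree RT(0^j, 1, b) is NOT super edge-graceful. -/

import Mathlib

/-! As `q` is odd, `0` is an edge label but not a vertex label. Hence the edge labelled `0` is not
pendant and does not lead to a child with at most one leaf (that child would repeat the label of
its leaf), so in `RT(0^j, 1, b)` it joins the root to the child with `b ≥ 2` leaves. For `j = 1`
the extreme vertex labels `±(q / 2 + 1)`, which no single edge carries, cannot both be placed. -/

/-- Edge type of the rooted tree `RT(a₀, …, a_{n-1})`: one edge from the root to each
child `i` (`Sum.inl i`), and one edge from child `i` to each of its `a i` leaf children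
(`Sum.inr ⟨i, m⟩`).  The number of edges is `q = n + ∑ i, a i`. -/
abbrev RTEdge (n : ℕ) (a : Fin n → ℕ) := (Fin n) ⊕ (Σ i : Fin n, Fin (a i))

/-- Vertex type of the rooted tree `RT(a₀, …, a_{n-1})`: the root (`none`), the children
`some (.inl i)` of the root, and the leaves `some (.inr ⟨i, m⟩)` attached to child `i`.
The number of vertices is `p = q + 1`. -/
abbrev RTVertex (n : ℕ) (a : Fin n → ℕ) := Option (RTEdge n a)

/-- The vertex labeling induced by an edge labeling `f`: each vertex gets the sum of the
labels of the edges incident with it. -/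
def vertexSum {n : ℕ} (a : Fin n → ℕ) (f : RTEdge n a → ℤ) : RTVertex n a → ℤ
  | none => ∑ i : Fin n, f (Sum.inl i)
  | some (Sum.inl i) => f (Sum.inl i) + ∑ m : Fin (a i), f (Sum.inr ⟨i, m⟩)
  | some (Sum.inr ⟨i, m⟩) => f (Sum.inr ⟨i, m⟩)

/-- The target label set for `q` objects: `{0, ±1, …, ±(q-1)/2}` if `q` is odd, and
`{±1, …, ±(q/2)}` if `q` is even. -/
noncomputable def segSet (q : ℕ) : Finset ℤ :=
  if q % 2 = 0 then (Finset.Icc (-((q / 2 : ℕ) : ℤ)) ((q / 2 : ℕ) : ℤ)).erase 0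
  else Finset.Icc (-((q / 2 : ℕ) : ℤ)) ((q / 2 : ℕ) : ℤ)

/-- The rooted tree `RT(a₀, …, a_{n-1})` is super edge-graceful: there is an edge
labeling which is a bijection onto `{0, ±1, …, ±(q-1)/2}` (`q` odd) resp.
`{±1, …, ±(q/2)}` (`q` even) whose induced vertex labeling is a bijection onto
`{0, ±1, …, ±(p-1)/2}` (`p` odd) resp. `{±1, …, ±(p/2)}` (`p` even), where
`q = n + ∑ i, a i` and `p = q + 1`. -/
def IsSEG {n : ℕ} (a : Fin n → ℕ) : Prop :=
  ∃ f : RTEdge n a → ℤ,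
    Set.BijOn f Set.univ ↑(segSet (n + ∑ i, a i)) ∧
    Set.BijOn (vertexSum a f) Set.univ ↑(segSet (n + ∑ i, a i + 1))

/-- The sequence `(0^j, a, b)` of length `j + 2`. -/
def seq2 (j a b : ℕ) : Fin (j + 2) → ℕ :=
  fun i => if (i : ℕ) < j then 0 else if (i : ℕ) = j then a else b

def edgeCount {n : ℕ} (a : Fin n → ℕ) : ℕ := n + ∑ i, a i

def IsSEGLabeling {n : ℕ} (a : Fin n → ℕ) (f : RTEdge n a → ℤ) : Prop :=
  Set.BijOn f Set.univ ↑(segSet (edgeCount a)) ∧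
    Set.BijOn (vertexSum a f) Set.univ ↑(segSet (edgeCount a + 1))

theorem mem_segSet_of_odd {q : ℕ} (hq : Odd q) {t : ℤ} :
    t ∈ segSet q ↔ |t| ≤ (q / 2 : ℕ) := by
  rw [segSet, if_neg (Nat.odd_iff.mp hq ▸ one_ne_zero), Finset.mem_Icc, abs_le]

theorem mem_segSet_of_even {q : ℕ} (hq : Even q) {t : ℤ} :
    t ∈ segSet q ↔ t ≠ 0 ∧ |t| ≤ (q / 2 : ℕ) := by
  rw [segSet, if_pos (Nat.even_iff.mp hq), Finset.mem_erase, Finset.mem_Icc, abs_le]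

theorem abs_le_of_mem_segSet {q : ℕ} {t : ℤ} (ht : t ∈ segSet q) : |t| ≤ (q / 2 : ℕ) := by
  rcases Nat.even_or_odd q with hq | hq
  · exact ((mem_segSet_of_even hq).mp ht).2
  · exact (mem_segSet_of_odd hq).mp ht

section vertexSum

variable {n : ℕ} {a : Fin n → ℕ} (f : RTEdge n a → ℤ) {i : Fin n}

theorem vertexSum_some_inl_of_eq_zero (h : a i = 0) :
    vertexSum a f (some (.inl i)) = f (.inl i) := by
  rw [vertexSum, Finset.sum_eq_zero fun m _ => absurd m.isLt (by omega), add_zero]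

theorem exists_vertexSum_some_inl_of_eq_one (h : a i = 1) :
    ∃ m, vertexSum a f (some (.inl i)) = f (.inl i) + f (.inr ⟨i, m⟩) := by
  have : Subsingleton (Fin (a i)) := Fin.subsingleton_iff_le_one.mpr h.le
  exact ⟨⟨0, by omega⟩, by rw [vertexSum, Fintype.sum_subsingleton]⟩

end vertexSum

namespace IsSEGLabeling

variable {n : ℕ} {a : Fin n → ℕ} {f : RTEdge n a → ℤ}

theorem injective (hf : IsSEGLabeling a f) : Function.Injective f :=
  fun _ _ => hf.1.injOn (Set.mem_univ _) (Set.mem_univ _)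

theorem vertexSum_injective (hf : IsSEGLabeling a f) : Function.Injective (vertexSum a f) :=
  fun _ _ => hf.2.injOn (Set.mem_univ _) (Set.mem_univ _)

theorem abs_le (hf : IsSEGLabeling a f) (e : RTEdge n a) : |f e| ≤ (edgeCount a / 2 : ℕ) :=
  abs_le_of_mem_segSet (hf.1.mapsTo (Set.mem_univ e))

theorem exists_eq_zero (hf : IsSEGLabeling a f) (hq : Odd (edgeCount a)) : ∃ e, f e = 0 := by
  obtain ⟨e, -, he⟩ := hf.1.surjOn (show (0 : ℤ) ∈ segSet (edgeCount a) by
    rw [mem_segSet_of_odd hq, abs_zero]; positivity)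
  exact ⟨e, he⟩

theorem vertexSum_ne_zero (hf : IsSEGLabeling a f) (hq : Odd (edgeCount a)) (v : RTVertex n a) :
    vertexSum a f v ≠ 0 :=
  ((mem_segSet_of_even hq.add_one).mp (hf.2.mapsTo (Set.mem_univ v))).1

theorem exists_vertexSum_eq (hf : IsSEGLabeling a f) (hq : Odd (edgeCount a)) {t : ℤ}
    (ht : t ≠ 0) (htK : |t| ≤ (edgeCount a / 2 : ℕ) + 1) : ∃ v, vertexSum a f v = t := by
  have hhalf : (edgeCount a + 1) / 2 = edgeCount a / 2 + 1 := by
    obtain ⟨k, hk⟩ := hq; omega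
  obtain ⟨v, -, hv⟩ := hf.2.surjOn (show t ∈ segSet (edgeCount a + 1) by
    rw [mem_segSet_of_even hq.add_one, hhalf]; push_cast; exact ⟨ht, htK⟩)
  exact ⟨v, hv⟩

theorem eq_inl_of_eq_zero (hf : IsSEGLabeling a f) (hq : Odd (edgeCount a)) {e : RTEdge n a}
    (he : f e = 0) :
    ∃ i, e = .inl i ∧ 2 ≤ a i := by
  rcases e with i | ⟨i, m⟩
  · refine ⟨i, rfl, ?_⟩
    by_contra! hi
    obtain hi0 | hi1 : a i = 0 ∨ a i = 1 := by omega
    · exact hf.vertexSum_ne_zero hq _ ((vertexSum_some_inl_of_eq_zero f hi0).trans he)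
    · obtain ⟨m, hm⟩ := exists_vertexSum_some_inl_of_eq_one f hi1
      rw [he, zero_add] at hm
      have : vertexSum a f (some (.inl i)) = vertexSum a f (some (.inr ⟨i, m⟩)) := hm
      simpa using hf.vertexSum_injective this
  · exact absurd he (hf.vertexSum_ne_zero hq (some (.inr ⟨i, m⟩)))

end IsSEGLabeling

theorem sum_seq2 (j a b : ℕ) : ∑ i, seq2 j a b i = a + b := by
  rw [Fin.sum_univ_castSucc, Fin.sum_univ_castSucc,
    Finset.sum_eq_zero fun i _ => by simp [seq2]]
  simp [seq2]

theorem eq_last_of_two_le_seq2 {j a b : ℕ} (ha : a < 2) {i : Fin (j + 2)}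
    (hi : 2 ≤ seq2 j a b i) : i = Fin.last (j + 1) := by
  unfold seq2 at hi
  split_ifs at hi <;> first | omega | exact Fin.ext (by simp; omega)

/-- With `0` on the edge to the child `w` with `b` leaves, the label `x` of the edge to the child
`u` with one leaf can only be the label of `w`. The labels `±(K + 1)`, `K = q / 2`, exceed every
edge label, so they sit at the root and at `u`; but these two labels differ by
`f (v₀v₁) - f (uu')`, which is at most `2K` in absolute value. -/
theorem IsSEGLabeling.seq2_one_one_apply_inl_last_ne_zero {b : ℕ}
    {f : RTEdge (1 + 2) (seq2 1 1 b) → ℤ}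
    (hf : IsSEGLabeling (seq2 1 1 b) f) (hq : Odd (edgeCount (seq2 1 1 b))) :
    f (.inl (Fin.last 2)) ≠ 0 := by
  intro hw0
  replace hw0 : f (.inl 2) = 0 := hw0
  set K : ℤ := ((edgeCount (seq2 1 1 b) / 2 : ℕ) : ℤ)
  obtain ⟨m, hu⟩ := exists_vertexSum_some_inl_of_eq_one f (i := 1) rfl
  have hv₁ : vertexSum _ f (some (.inl 0)) = f (.inl 0) := vertexSum_some_inl_of_eq_zero f rfl
  have hroot : vertexSum _ f none = f (.inl 0) + f (.inl 1) := by
    simp [vertexSum, Fin.sum_univ_three, hw0]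
  have hw : vertexSum _ f (some (.inl (Fin.last 2))) = f (.inl 1) := by
    obtain ⟨v, hv⟩ := hf.exists_vertexSum_eq hq (t := f (.inl 1))
      (fun h => by simpa using hf.injective (h.trans hw0.symm))
      ((hf.abs_le _).trans (by omega))
    rcases v with _ | i | ⟨i, m'⟩
    · have := hf.injective ((by linarith : f (.inl 0) = 0).trans hw0.symm)
      simp at this
    · obtain rfl | rfl | rfl : i = 0 ∨ i = 1 ∨ i = 2 := by fin_cases i <;> simp
      · simpa using hf.injective (hv₁.symm.trans hv)
      · have := hf.injective ((by linarith : f (.inr ⟨1, m⟩) = 0).trans hw0.symm)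
        simp at this
      · exact hv
    · simpa using hf.injective hv
  have hedge : ∀ v, v = none ∨ v = some (.inl 1) ∨ ∃ e, vertexSum _ f v = f e := by
    rintro (_ | i | ⟨i, m'⟩)
    · exact .inl rfl
    · obtain rfl | rfl | rfl : i = 0 ∨ i = 1 ∨ i = 2 := by fin_cases i <;> simp
      · exact .inr (.inr ⟨_, hv₁⟩)
      · exact .inr (.inl rfl)
      · exact .inr (.inr ⟨_, hw⟩)
    · exact .inr (.inr ⟨_, rfl⟩)
  have hK0 : 0 ≤ K := by positivity
  have hbig : ∀ t, |t| = K + 1 → ∃ v, (v = none ∨ v = some (.inl 1)) ∧ vertexSum _ f v = t := by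
    intro t ht
    obtain ⟨v, hv⟩ := hf.exists_vertexSum_eq hq (t := t) (by rintro rfl; simp at ht; omega) ht.le
    refine ⟨v, ?_, hv⟩
    rcases hedge v with h | h | ⟨e, he⟩
    · exact .inl h
    · exact .inr h
    · have := hf.abs_le e; rw [← he, hv] at this; omega
  obtain ⟨vhi, hvhi, hvhiK⟩ := hbig (K + 1) (abs_of_nonneg (by omega))
  obtain ⟨vlo, hvlo, hvloK⟩ := hbig (-(K + 1)) (by rw [abs_neg, abs_of_nonneg (by omega)])
  have h₀ := _root_.abs_le.mp (hf.abs_le (.inl 0))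
  have h₁ := _root_.abs_le.mp (hf.abs_le (.inr ⟨1, m⟩))
  rcases hvhi with rfl | rfl <;> rcases hvlo with rfl | rfl
  all_goals linarith

theorem stmt5_general (j b : ℕ) (hj : Odd j) (hb : Odd b)
    (h : j = 1 ∨ b = 1) : ¬ IsSEG (seq2 j 1 b) := by
  rintro ⟨f, hf : IsSEGLabeling _ f⟩
  have hq : Odd (edgeCount (seq2 j 1 b)) := by
    rw [edgeCount, sum_seq2]
    obtain ⟨k, rfl⟩ := hj; obtain ⟨l, rfl⟩ := hb
    exact ⟨k + l + 2, by ring⟩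
  obtain ⟨e, he⟩ := hf.exists_eq_zero hq
  obtain ⟨i, rfl, hi⟩ := hf.eq_inl_of_eq_zero hq he
  obtain rfl := eq_last_of_two_le_seq2 one_lt_two hi
  rcases h with rfl | rfl
  · exact hf.seq2_one_one_apply_inl_last_ne_zero hq he
  · simp [seq2] at hi

/-- For all odd integers `j ≥ 1` and `b ≥ 1` such that `j = 1` or `b = 1`, the rooted
tree `RT(0^j, 1, b)` is not super edge-graceful. -/
theorem stmt5 (j b : ℕ) (hj : Odd j) (hj1 : 1 ≤ j) (hb : Odd b) (hb1 : 1 ≤ b)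
    (h : j = 1 ∨ b = 1) : ¬ IsSEG (seq2 j 1 b) :=
  stmt5_general j b hj hb h
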